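/- Suppose block W is correct, i.e. |F ∩ W| ≤ f_W, and there exists a round t0 ≤ T_P such that for every correct u ∈ W and every round t ≥ t0: a(u,t) = 1 if and only if Ψ divides t − t0 (the block's strong Ψ-pulser has stabilised by round T_P). Then there exists a round r0 ≤ T_P + 2 such that for every correct node v ∈ V and every round t ≥ r0: M(v,t) = 1 if and only if t = r0 + kΨ for some integer k ≥ 0. -/
import Mathlib


/-- Lemma: votes for a correct block.
Consider a network on node set `V` with `n = |V| > 3f` nodes, Byzantine faulty
set `F` with `|F| ≤ f`, and a block `W ⊆ V` with `|W| > 3 f_W` nodes.  Correct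
nodes `u ∈ W` output pulser bits `a(u,t)`; communication is modelled by
received-value functions `arec`, `mrec` agreeing with the sent values for
correct senders.  Every correct node `v ∈ V` computes
`m(v,t+1) = 1` iff it received `a = 1` from at least `|W| − f_W` nodes of `W`,
and `M(v,t+1) = 1` iff it received `m = 1` from at least `n − f` nodes of `V`.
If the block is correct (`|F ∩ W| ≤ f_W`) and its strong `Ψ`-pulser has
stabilised by round `T_P` (there is `t0 ≤ T_P` with: for correct `u ∈ W` and
`t ≥ t0`, `a(u,t) = 1` iff `Ψ ∣ t − t0`), then there is a round `r0 ≤ T_P + 2`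
such that for every correct `v ∈ V` and `t ≥ r0`:
`M(v,t) = 1` iff `t = r0 + kΨ` for some `k ≥ 0`. -/
theorem correct_block_votes {V : Type*} [Fintype V] [DecidableEq V]
    (F W : Finset V) (f fW Ψ TP : ℕ)
    (hn : Fintype.card V > 3 * f) (hF : F.card ≤ f)
    (hnW : W.card > 3 * fW) (hWcorrect : (F ∩ W).card ≤ fW)
    (hΨ : 1 ≤ Ψ) (hTP : 1 ≤ TP)
    (a : V → ℕ → ℕ) (arec : V → V → ℕ → ℕ)
    (m M : V → ℕ → ℕ) (mrec : V → V → ℕ → ℕ)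
    -- the block's strong pulser has stabilised by round `TP`:
    (t0 : ℕ) (ht0l : 1 ≤ t0) (ht0u : t0 ≤ TP)
    (hstab : ∀ u ∈ W, u ∉ F → ∀ t, t0 ≤ t → (a u t = 1 ↔ Ψ ∣ (t - t0)))
    (habits : ∀ u ∈ W, u ∉ F → ∀ t, a u t = 0 ∨ a u t = 1)
    -- received values agree with sent values for correct senders:
    (harec : ∀ v u, u ∈ W → u ∉ F → ∀ t, arec v u t = a u t)
    (hmrec : ∀ v u, u ∉ F → ∀ t, mrec v u t = m u t)
    -- computation of `m` and `M` at correct nodes (round-1 values arbitrary bits):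
    (hmbits : ∀ v, v ∉ F → ∀ t, m v t = 0 ∨ m v t = 1)
    (hm : ∀ v, v ∉ F → ∀ t, 1 ≤ t →
      (m v (t + 1) = 1 ↔ W.card - fW ≤ (W.filter fun u => arec v u t = 1).card))
    (hMbits : ∀ v, v ∉ F → ∀ t, M v t = 0 ∨ M v t = 1)
    (hM : ∀ v, v ∉ F → ∀ t, 1 ≤ t →
      (M v (t + 1) = 1 ↔
        Fintype.card V - f ≤ (Finset.univ.filter fun u => mrec v u t = 1).card)) :
    ∃ r0, 1 ≤ r0 ∧ r0 ≤ TP + 2 ∧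
      ∀ v, v ∉ F → ∀ t, r0 ≤ t → (M v t = 1 ↔ ∃ k, t = r0 + k * Ψ) := by
  refine ⟨t0 + 2, by omega, by omega, ?_⟩
  intro v hv t ht
  -- value of m at correct nodes after stabilisation
  have hmval : ∀ u, u ∉ F → ∀ s, t0 ≤ s → (m u (s + 1) = 1 ↔ Ψ ∣ s - t0) := by
    intro u hu s hs
    rw [hm u hu s (by omega)]
    constructor
    · intro hcard
      by_contra hdvd
      have hsub : (W.filter fun w => arec u w s = 1) ⊆ F ∩ W := by
        intro w hw
        simp only [Finset.mem_filter] at hw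
        obtain ⟨hwW, hwrec⟩ := hw
        by_contra hwF
        simp only [Finset.mem_inter] at hwF
        have hwF' : w ∉ F := fun h => hwF ⟨h, hwW⟩
        rw [harec u w hwW hwF' s] at hwrec
        exact hdvd ((hstab w hwW hwF' s hs).mp hwrec)
      have := Finset.card_le_card hsub
      omega
    · intro hdvd
      have hsub : (W \ F) ⊆ W.filter fun w => arec u w s = 1 := by
        intro w hw
        simp only [Finset.mem_sdiff] at hw
        simp only [Finset.mem_filter]
        refine ⟨hw.1, ?_⟩
        rw [harec u w hw.1 hw.2 s]
        exact (hstab w hw.1 hw.2 s hs).mpr hdvd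
      have h1 := Finset.card_le_card hsub
      have h2 : (W \ F).card + (W ∩ F).card = W.card :=
        Finset.card_sdiff_add_card_inter W F
      have h3 : (W ∩ F).card = (F ∩ W).card := by rw [Finset.inter_comm]
      omega
  obtain ⟨s, hs, rfl⟩ : ∃ s, t0 ≤ s ∧ t = s + 1 + 1 := ⟨t - 2, by omega, by omega⟩
  rw [hM v hv (s + 1) (by omega)]
  have hMiff : Fintype.card V - f ≤
      (Finset.univ.filter fun u => mrec v u (s + 1) = 1).card ↔ Ψ ∣ s - t0 := by
    constructor
    · intro hcard
      by_contra hdvd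
      have hsub : (Finset.univ.filter fun u => mrec v u (s + 1) = 1) ⊆ F := by
        intro w hw
        simp only [Finset.mem_filter] at hw
        by_contra hwF
        rw [hmrec v w hwF (s + 1)] at hw
        exact hdvd ((hmval w hwF s hs).mp hw.2)
      have := Finset.card_le_card hsub
      omega
    · intro hdvd
      have hsub : Fᶜ ⊆ Finset.univ.filter fun u => mrec v u (s + 1) = 1 := by
        intro w hw
        simp only [Finset.mem_compl] at hw
        simp only [Finset.mem_filter, Finset.mem_univ, true_and]
        rw [hmrec v w hw (s + 1)]
        exact (hmval w hw s hs).mpr hdvd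
      have h1 := Finset.card_le_card hsub
      have h2 : (Fᶜ : Finset V).card = Fintype.card V - F.card :=
        Finset.card_compl F
      omega
  rw [hMiff]
  constructor
  · rintro ⟨k, hk⟩
    refine ⟨k, ?_⟩
    rw [mul_comm] at hk
    generalize k * Ψ = q at hk ⊢
    omega
  · rintro ⟨k, hk⟩
    refine ⟨k, ?_⟩
    rw [mul_comm]
    generalize k * Ψ = q at hk ⊢
    omega
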